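/- arXiv:2508.14077 — 3 statements merged into one kernel-verified Lean document; each statement's English description precedes it below -/
import Mathlib

section
/- For the construction T_α = B_α · Y with Y = f(X) deterministic, B_α ~ Bernoulli(α) independent of X, and Y taking values in {1,...,K}, the map α ↦ I(X;T_α) is continuous on [0,1], I(X;T_0) = 0, and I(X;T_1) = H(Y); hence for every r ∈ [0, H(Y)] there exists α ∈ [0,1] with I(X;T_α) = r and I(T_α;Y) = r. -/
open Finset
open Finset

/-- Shannon entropy (natural log, convention 0·log 0 = 0). -/
noncomputable def entropy {A : Type*} [Fintype A] (p : A → ℝ) : ℝ :=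
  -∑ a, p a * Real.log (p a)

/-- Mutual information of a joint pmf on a product of finite sets. -/
noncomputable def mutualInfo {A B : Type*} [Fintype A] [Fintype B] (p : A × B → ℝ) : ℝ :=
  ∑ a, ∑ b, p (a, b) * Real.log (p (a, b) / ((∑ b', p (a, b')) * (∑ a', p (a', b))))

/-- Joint pmf of (X, T_α) where Y = f(X) and T_α = B_α·Y with B_α ~ Bernoulli(α)
independent of X; T_α takes values in {0, 1, ..., K} = Fin (K+1). -/
noncomputable def jointXT {X : Type*} [Fintype X] (K : ℕ) (p : X → ℝ)
    (f : X → Fin (K + 1)) (α : ℝ) : X × Fin (K + 1) → ℝ :=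
  fun z => p z.1 * (α * (if z.2 = f z.1 then 1 else 0)
    + (1 - α) * (if z.2 = 0 then 1 else 0))

/-- Joint pmf of (T_α, Y) for the same construction. -/
noncomputable def jointTY {X : Type*} [Fintype X] (K : ℕ) (p : X → ℝ)
    (f : X → Fin (K + 1)) (α : ℝ) : Fin (K + 1) × Fin (K + 1) → ℝ :=
  fun z => ∑ x, if f x = z.2 then jointXT K p f α (x, z.1) else 0

lemma group_sum {X : Type*} [Fintype X] {K : ℕ} (p : X → ℝ) (f : X → Fin (K+1))
    (c : Fin (K+1) → ℝ) :
    ∑ x, p x * c (f x) = ∑ y, (∑ x, if f x = y then p x else 0) * c y := by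
  symm
  calc ∑ y, (∑ x, if f x = y then p x else 0) * c y
      = ∑ y, ∑ x, (if f x = y then p x * c y else 0) := by
        refine Finset.sum_congr rfl fun y _ => ?_
        rw [Finset.sum_mul]
        exact Finset.sum_congr rfl fun x _ => by split <;> simp
    _ = ∑ x, ∑ y, (if f x = y then p x * c y else 0) := Finset.sum_comm
    _ = ∑ x, p x * c (f x) := by simp [Finset.sum_ite_eq]

lemma key_formula {X : Type*} [Fintype X] (K : ℕ)
    (p : X → ℝ) (hp0 : ∀ x, 0 ≤ p x) (hp1 : ∑ x, p x = 1)
    (f : X → Fin (K + 1)) (hf : ∀ x, p x ≠ 0 → f x ≠ 0) (α : ℝ) :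
    mutualInfo (jointXT K p f α)
      = α * entropy (fun y => ∑ x, if f x = y then p x else 0) := by
  set q : Fin (K+1) → ℝ := fun y => ∑ x, if f x = y then p x else 0 with hqdef
  have hq0 : ∀ y, 0 ≤ q y := fun y =>
    Finset.sum_nonneg fun x _ => by split <;> [exact hp0 x; exact le_rfl]
  have hqzero : q 0 = 0 := by
    refine Finset.sum_eq_zero fun x _ => ?_
    by_cases h : f x = 0
    · simp only [h, if_pos rfl]
      by_contra hne
      exact hf x hne h
    · simp [h]
  have hle : ∀ x, p x ≤ q (f x) := by
    intro x
    have h := Finset.single_le_sum (f := fun x' => if f x' = f x then p x' else 0)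
        (fun i _ => by by_cases h : f i = f x <;> simp [h, hp0 i]) (Finset.mem_univ x)
    simpa using h
  have hrow : ∀ x, ∑ t, jointXT K p f α (x, t) = p x := by
    intro x
    unfold jointXT
    dsimp only
    rw [← Finset.mul_sum]
    simp [Finset.sum_add_distrib, ← Finset.mul_sum, Finset.sum_ite_eq', Finset.sum_ite_eq]
  have hcol : ∀ t, ∑ x', jointXT K p f α (x', t)
      = α * q t + (1 - α) * (if t = 0 then 1 else 0) := by
    intro t
    unfold jointXT
    have : ∀ x', p x' * (α * (if t = f x' then 1 else 0) + (1 - α) * (if t = 0 then 1 else 0))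
        = α * (if f x' = t then p x' else 0) + (1 - α) * (if t = 0 then 1 else 0) * p x' := by
      intro x'
      by_cases h1 : f x' = t
      · subst h1
        by_cases h2 : f x' = 0 <;> simp [h2] <;> ring
      · by_cases h2 : t = 0
        · subst h2
          have h3 : ¬ ((0 : Fin (K+1)) = f x') := fun h => h1 h.symm
          have h4 : ¬ (f x' = 0) := fun h => h1 h
          simp [h3, h4]
          ring
        · have h3 : ¬ t = f x' := fun h => h1 h.symm
          simp [h3, h1, h2]
    rw [Finset.sum_congr rfl fun x' _ => this x']
    rw [Finset.sum_add_distrib, ← Finset.mul_sum, ← Finset.mul_sum, hp1, hqdef]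
    ring
  have step : ∀ x t, jointXT K p f α (x, t) *
      Real.log (jointXT K p f α (x, t) /
        ((∑ t', jointXT K p f α (x, t')) * (∑ x', jointXT K p f α (x', t))))
      = if t = f x then α * (p x * (-Real.log (q (f x)))) else 0 := by
    intro x t
    rw [hrow, hcol]
    by_cases hx : p x = 0
    · simp [jointXT, hx]
    have hpx : 0 < p x := lt_of_le_of_ne (hp0 x) (Ne.symm hx)
    have hfx : f x ≠ 0 := hf x hx
    have hqx : 0 < q (f x) := lt_of_lt_of_le hpx (hle x)
    by_cases ht0 : t = 0
    · subst ht0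
      rw [if_neg (Ne.symm hfx)]
      have hJ : jointXT K p f α (x, (0 : Fin (K+1))) = p x * (1 - α) := by
        have h0f : ¬ ((0 : Fin (K+1)) = f x) := Ne.symm hfx
        simp [jointXT, h0f]
      rw [hJ, hqzero]
      by_cases hα : α = 1
      · simp [hα]
      · have hc : p x * (1 - α) ≠ 0 :=
          mul_ne_zero hx (sub_ne_zero.mpr fun h => hα h.symm)
        have hden : α * 0 + (1 - α) * (if (0 : Fin (K+1)) = 0 then (1:ℝ) else 0) = 1 - α := by
          simp
        rw [hden, div_self hc, Real.log_one, mul_zero]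
    · by_cases htf : t = f x
      · subst htf
        rw [if_pos rfl]
        have hJ : jointXT K p f α (x, f x) = p x * α := by
          simp [jointXT, hfx]
        rw [hJ]
        have hden : α * q (f x) + (1 - α) * (if f x = 0 then (1:ℝ) else 0) = α * q (f x) := by
          simp [hfx]
        rw [hden]
        by_cases hα : α = 0
        · simp [hα]
        · have hq' : q (f x) ≠ 0 := hqx.ne'
          have harg : p x * α / (p x * (α * q (f x))) = (q (f x))⁻¹ := by
            field_simp
          rw [harg, Real.log_inv]
          ring
      · simp [jointXT, htf, ht0]
  unfold mutualInfo
  rw [Finset.sum_congr rfl fun x _ => Finset.sum_congr rfl fun t _ => step x t]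
  simp only [Finset.sum_ite_eq', Finset.mem_univ, if_true]
  rw [← Finset.mul_sum]
  congr 1
  rw [group_sum p f (fun y => -Real.log (q y))]
  have hfold : ∀ y, (∑ x, if f x = y then p x else 0) = q y := fun y => rfl
  simp only [hfold]
  unfold entropy
  simp [mul_neg, Finset.sum_neg_distrib]

lemma mutualInfo_swap {A B : Type*} [Fintype A] [Fintype B] (m : A × B → ℝ) :
    mutualInfo (fun z : B × A => m (z.2, z.1)) = mutualInfo m := by
  unfold mutualInfo
  rw [Finset.sum_comm]
  refine Finset.sum_congr rfl fun a _ => Finset.sum_congr rfl fun b _ => ?_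
  dsimp only
  rw [mul_comm (∑ a', m (a', b)) (∑ b', m (a, b'))]

lemma jointTY_eq {X : Type*} [Fintype X] (K : ℕ) (p : X → ℝ)
    (f : X → Fin (K + 1)) (α : ℝ) (t y : Fin (K + 1)) :
    jointTY K p f α (t, y)
      = jointXT K (fun y' => ∑ x, if f x = y' then p x else 0) id α (y, t) := by
  unfold jointTY jointXT
  dsimp only [id]
  rw [Finset.sum_mul]
  refine Finset.sum_congr rfl fun x _ => ?_
  by_cases h : f x = y
  · rw [if_pos h, if_pos h, h]
  · simp [h]

/-- for the construction T_α = B_α·Y with Y = f(X) deterministic,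
f valued in {1,...,K}, and B_α ~ Bernoulli(α) independent of X, the map
α ↦ I(X;T_α) is continuous on [0,1] with I(X;T_0) = 0 and I(X;T_1) = H(Y);
hence (by the intermediate value theorem and I(T_α;Y) = I(X;T_α)) for every
r ∈ [0, H(Y)] there is α ∈ [0,1] with I(X;T_α) = r and I(T_α;Y) = r. -/
theorem bernoulli_sweep_attains_all_levels
    {X : Type*} [Fintype X] (K : ℕ)
    (p : X → ℝ) (hp0 : ∀ x, 0 ≤ p x) (hp1 : ∑ x, p x = 1)
    (f : X → Fin (K + 1)) (hf : ∀ x, f x ≠ 0) :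
    ContinuousOn (fun α => mutualInfo (jointXT K p f α)) (Set.Icc 0 1) ∧
      mutualInfo (jointXT K p f 0) = 0 ∧
      mutualInfo (jointXT K p f 1)
        = entropy (fun y => ∑ x, if f x = y then p x else 0) ∧
      ∀ r ∈ Set.Icc (0 : ℝ) (entropy (fun y => ∑ x, if f x = y then p x else 0)),
        ∃ α ∈ Set.Icc (0 : ℝ) 1,
          mutualInfo (jointXT K p f α) = r ∧ mutualInfo (jointTY K p f α) = r := by
  have hkey1 : ∀ α : ℝ, mutualInfo (jointXT K p f α)
      = α * entropy (fun y => ∑ x, if f x = y then p x else 0) :=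
    fun α => key_formula K p hp0 hp1 f (fun x _ => hf x) α
  set q : Fin (K+1) → ℝ := fun y => ∑ x, if f x = y then p x else 0 with hqdef
  have hq0 : ∀ y, 0 ≤ q y := fun y =>
    Finset.sum_nonneg fun x _ => by split <;> [exact hp0 x; exact le_rfl]
  have hq1 : ∑ y, q y = 1 := by
    rw [hqdef]
    rw [Finset.sum_comm]
    simp [Finset.sum_ite_eq, hp1]
  have hqzero : q 0 = 0 := by
    refine Finset.sum_eq_zero fun x _ => ?_
    simp [hf x]
  have hkey2 : ∀ α : ℝ, mutualInfo (jointTY K p f α) = α * entropy q := by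
    intro α
    have h1 : jointTY K p f α = fun z : Fin (K+1) × Fin (K+1) =>
        jointXT K q id α (z.2, z.1) := by
      funext z
      obtain ⟨t, y⟩ := z
      exact jointTY_eq K p f α t y
    rw [h1, mutualInfo_swap, key_formula K q hq0 hq1 id
      (fun y hy h0 => hy ((show y = 0 from h0) ▸ hqzero)) α]
    congr 1
    unfold entropy
    congr 1
    refine Finset.sum_congr rfl fun y _ => ?_
    have h2 : (∑ y', if id y' = y then q y' else 0) = q y := by
      simp [Finset.sum_ite_eq']
    dsimp only
    rw [h2]
  refine ⟨?_, ?_, ?_, ?_⟩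
  · have h : (fun α => mutualInfo (jointXT K p f α)) = fun α : ℝ => α * entropy q :=
      funext hkey1
    rw [h]
    exact (continuous_id.mul continuous_const).continuousOn
  · rw [hkey1 0, zero_mul]
  · rw [hkey1 1, one_mul]
  · intro r hr
    obtain ⟨hr0, hrH⟩ := hr
    by_cases hH : entropy q = 0
    · have hH' : entropy q = 0 := hH
      refine ⟨0, ⟨le_refl 0, zero_le_one⟩, ?_, ?_⟩
      · rw [hkey1 0, zero_mul]; linarith
      · rw [hkey2 0, zero_mul]; linarith
    · have hHpos : 0 < entropy q := lt_of_le_of_ne (le_trans hr0 hrH) (Ne.symm hH)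
      refine ⟨r / entropy q, ⟨div_nonneg hr0 hHpos.le, (div_le_one hHpos).mpr hrH⟩, ?_, ?_⟩
      · rw [hkey1]; exact div_mul_cancel₀ r hHpos.ne'
      · rw [hkey2]; exact div_mul_cancel₀ r hHpos.ne'
end

section
/- Under Assumptions of no contradicting labels (empirical labels are a deterministic function of inputs) and full model flexibility, the minimizers of the empirical cross entropy loss satisfy p_θ(T|x_i) = 1[T = y_i] for all i, and consequently the induced representation T satisfies Î(T;Y) = Î(X;T) = Ĥ(Y) under the empirical distribution. -/
/-!
The empirical cross entropy is a sum of terms `-log p`, `p` a probability, hence nonnegative,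
and it vanishes at the conditional `fitLabels x y cond` that puts all mass on the observed label
of each sample input (well defined because labels are a function of inputs). A minimizer
therefore has zero loss, i.e. gives probability one to every observed label. Both joint
distributions are then empirical distributions of sample pairs `(uᵢ, vᵢ)` in which `v` is a
function of `u`; for those `p̂(uᵢ, vᵢ) = p̂(uᵢ)`, so the `i`-th term of `Î(U;V)` is `-log p̂(vᵢ)`
and `Î(U;V) = Ĥ(V)`.
-/

open Finset

section PointMass

variable {Y : Type*} [Fintype Y]

theorem eq_single_of_mem_stdSimplex_of_apply_eq_one [DecidableEq Y] {p : Y → ℝ}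
    (hp : p ∈ stdSimplex ℝ Y) {b : Y} (hb : p b = 1) : p = Pi.single b 1 := by
  funext t
  rcases eq_or_ne t b with rfl | htb
  · rw [hb, Pi.single_eq_same]
  rw [Pi.single_eq_of_ne htb]
  have hrest : ∑ s ∈ {b}ᶜ, p s = 0 := by
    linarith [hp.2, Fintype.sum_eq_add_sum_compl b p]
  exact (sum_eq_zero_iff_of_nonneg fun s _ => hp.1 s).1 hrest t (by simpa using htb)

theorem neg_log_nonneg_of_mem_stdSimplex {p : Y → ℝ} (hp : p ∈ stdSimplex ℝ Y) (t : Y) :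
    0 ≤ -Real.log (p t) :=
  neg_nonneg.2 (Real.log_nonpos (hp.1 t) (mem_Icc_of_mem_stdSimplex hp t).2)

theorem eq_single_of_sum_neg_log_nonpos [DecidableEq Y] {ι X : Type*} [Fintype ι]
    {x : ι → X} {y : ι → Y} {cond : X → Y → ℝ}
    (hcond : ∀ a, cond a ∈ stdSimplex ℝ Y) (hpos : ∀ i, 0 < cond (x i) (y i))
    (hloss : ∑ i, -Real.log (cond (x i) (y i)) ≤ 0) (i : ι) :
    cond (x i) = Pi.single (y i) 1 := by
  have hterm_nonneg i := neg_log_nonneg_of_mem_stdSimplex (hcond (x i)) (y i)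
  have hterm_zero : -Real.log (cond (x i) (y i)) = 0 :=
    (sum_eq_zero_iff_of_nonneg fun j _ => hterm_nonneg j).1
      (hloss.antisymm (sum_nonneg fun j _ => hterm_nonneg j)) i (mem_univ i)
  exact eq_single_of_mem_stdSimplex_of_apply_eq_one (hcond (x i))
    (Real.eq_one_of_pos_of_log_eq_zero (hpos i) (neg_eq_zero.1 hterm_zero))

end PointMass

section FitLabels

variable {ι X Y : Type*} [DecidableEq Y]

noncomputable def fitLabels (x : ι → X) (y : ι → Y) (cond : X → Y → ℝ) : X → Y → ℝ :=
  Function.extend x (fun i => Pi.single (y i) 1) cond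

theorem fitLabels_mem_stdSimplex [Fintype Y] {x : ι → X} {y : ι → Y} {cond : X → Y → ℝ}
    (hcond : ∀ a, cond a ∈ stdSimplex ℝ Y) (a : X) :
    fitLabels x y cond a ∈ stdSimplex ℝ Y := by
  classical
  rw [fitLabels, Function.extend_def]
  split_ifs
  · exact single_mem_stdSimplex ℝ _
  · exact hcond a

theorem fitLabels_apply_self {x : ι → X} {y : ι → Y} (hyx : y.FactorsThrough x)
    (cond : X → Y → ℝ) (i : ι) : fitLabels x y cond (x i) (y i) = 1 := by
  have hrow : fitLabels x y cond (x i) = Pi.single (y i) 1 :=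
    (hyx.comp_left (Pi.single · (1 : ℝ))).extend_apply cond i
  rw [hrow, Pi.single_eq_same]

end FitLabels

section Empirical

variable {ι A B : Type*} [Fintype ι] [DecidableEq A] [DecidableEq B]

noncomputable def empirical (u : ι → A) (a : A) : ℝ :=
  (Fintype.card ι : ℝ)⁻¹ * ∑ i, if u i = a then 1 else 0

theorem sum_empirical_mul [Fintype A] (u : ι → A) (f : A → ℝ) :
    ∑ a, empirical u a * f a = (Fintype.card ι : ℝ)⁻¹ * ∑ i, f (u i) := by
  simp only [empirical, mul_assoc, ← mul_sum, sum_mul, ite_mul, one_mul, zero_mul]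
  rw [sum_comm]
  simp

theorem empirical_apply_self_pos (u : ι → A) (i : ι) : 0 < empirical u (u i) := by
  have : Nonempty ι := ⟨i⟩
  have hcount : (1 : ℝ) ≤ ∑ j, if u j = u i then 1 else 0 := by
    simpa using single_le_sum (f := fun j => if u j = u i then (1 : ℝ) else 0)
      (fun j _ => by positivity) (mem_univ i)
  unfold empirical
  positivity

theorem sum_empirical_prod_right [Fintype B] (u : ι → A) (v : ι → B) (a : A) :
    ∑ b, empirical (fun i => (u i, v i)) (a, b) = empirical u a := by
  simp only [empirical, ← mul_sum, Prod.mk.injEq, ite_and]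
  rw [sum_comm]
  simp

theorem sum_empirical_prod_left [Fintype A] (u : ι → A) (v : ι → B) (b : B) :
    ∑ a, empirical (fun i => (u i, v i)) (a, b) = empirical v b := by
  simp only [empirical, ← mul_sum, Prod.mk.injEq, ite_and]
  rw [sum_comm]
  simp

theorem empirical_prod_apply_self {u : ι → A} {v : ι → B} (huv : v.FactorsThrough u) (i : ι) :
    empirical (fun j => (u j, v j)) (u i, v i) = empirical u (u i) := by
  simp only [empirical, Prod.mk.injEq]
  congr 1
  refine sum_congr rfl fun j _ => ?_
  by_cases hj : u j = u i
  · simp [hj, huv hj]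
  · simp [hj]

theorem entropy_empirical [Fintype B] (v : ι → B) :
    entropy (empirical v) = -((Fintype.card ι : ℝ)⁻¹ * ∑ i, Real.log (empirical v (v i))) := by
  rw [entropy, sum_empirical_mul v fun b => Real.log (empirical v b)]

theorem mutualInfo_empirical_of_factorsThrough [Fintype A] [Fintype B] {u : ι → A} {v : ι → B}
    (huv : v.FactorsThrough u) :
    mutualInfo (empirical fun i => (u i, v i)) = entropy (empirical v) := by
  simp only [mutualInfo, sum_empirical_prod_right, sum_empirical_prod_left]
  rw [← Fintype.sum_prod_type' (fun a b => empirical (fun i => (u i, v i)) (a, b) *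
      Real.log (empirical (fun i => (u i, v i)) (a, b) / (empirical u a * empirical v b))),
    sum_empirical_mul (fun i => (u i, v i)) fun z =>
      Real.log (empirical (fun i => (u i, v i)) z / (empirical u z.1 * empirical v z.2)),
    entropy_empirical, ← mul_neg, ← sum_neg_distrib]
  congr 1
  refine sum_congr rfl fun i _ => ?_
  rw [empirical_prod_apply_self huv, div_mul_cancel_left₀ (empirical_apply_self_pos u i).ne',
    Real.log_inv]

theorem empirical_fin {N : ℕ} (u : Fin N → A) (a : A) :
    empirical u a = (N : ℝ)⁻¹ * ∑ i, if u i = a then 1 else 0 := by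
  rw [empirical, Fintype.card_fin]

end Empirical

section Joint

variable {N : ℕ} {X Y : Type*} [DecidableEq Y] {x : Fin N → X} {y : Fin N → Y}
  {cond : X → Y → ℝ}

theorem joint_output_label_eq_empirical (hsingle : ∀ i, cond (x i) = Pi.single (y i) 1) :
    (fun z : Y × Y => (N : ℝ)⁻¹ * ∑ i, if y i = z.2 then cond (x i) z.1 else 0)
      = empirical fun i => (y i, y i) := by
  funext ⟨t, b⟩
  rw [empirical_fin]
  congr 1
  refine sum_congr rfl fun i _ => ?_
  simp only [hsingle i, Pi.single_apply, Prod.mk.injEq]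
  grind

theorem joint_input_output_eq_empirical [DecidableEq X] (hsingle : ∀ i, cond (x i) = Pi.single (y i) 1) :
    (fun z : X × Y => (N : ℝ)⁻¹ * ∑ i, if x i = z.1 then cond z.1 z.2 else 0)
      = empirical fun i => (x i, y i) := by
  funext ⟨a, t⟩
  rw [empirical_fin]
  congr 1
  refine sum_congr rfl fun i _ => ?_
  by_cases h : x i = a
  · subst h
    simp only [hsingle i, Pi.single_apply, Prod.mk.injEq, true_and, if_true, eq_comm]
  · simp [h]

end Joint

theorem crossEntropy_minimizer_minimal_sufficiency_general
    {X Y : Type*} [Fintype X] [Fintype Y] [DecidableEq X] [DecidableEq Y]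
    (N : ℕ) (x : Fin N → X) (y : Fin N → Y)
    (hnc : ∀ i j, x i = x j → y i = y j)
    (cond : X → Y → ℝ)
    (hcond0 : ∀ a t, 0 ≤ cond a t) (hcond1 : ∀ a, ∑ t, cond a t = 1)
    (hpos : ∀ i, 0 < cond (x i) (y i))
    (hmin : ∀ cond' : X → Y → ℝ,
      (∀ a t, 0 ≤ cond' a t) → (∀ a, ∑ t, cond' a t = 1) →
      (∀ i, 0 < cond' (x i) (y i)) →
      (1 / (N : ℝ)) * ∑ i, -Real.log (cond (x i) (y i))
        ≤ (1 / (N : ℝ)) * ∑ i, -Real.log (cond' (x i) (y i))) :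
    (∀ i t, cond (x i) t = if t = y i then 1 else 0) ∧
      mutualInfo (fun z : Y × Y =>
          (N : ℝ)⁻¹ * ∑ i, if y i = z.2 then cond (x i) z.1 else 0)
        = entropy (fun b => (N : ℝ)⁻¹ * ∑ i, if y i = b then 1 else 0) ∧
      mutualInfo (fun z : X × Y =>
          (N : ℝ)⁻¹ * ∑ i, if x i = z.1 then cond z.1 z.2 else 0)
        = entropy (fun b => (N : ℝ)⁻¹ * ∑ i, if y i = b then 1 else 0) := by
  have hfac : y.FactorsThrough x := fun i j => hnc i j
  have hcond : ∀ a, cond a ∈ stdSimplex ℝ Y := fun a => ⟨hcond0 a, hcond1 a⟩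
  have hloss : ∑ i, -Real.log (cond (x i) (y i)) ≤ 0 := by
    obtain rfl | hN := N.eq_zero_or_pos
    · simp
    have hrel := hmin (fitLabels x y cond) (fun a => (fitLabels_mem_stdSimplex hcond a).1)
      (fun a => (fitLabels_mem_stdSimplex hcond a).2)
      (fun i => by rw [fitLabels_apply_self hfac]; exact one_pos)
    simp only [fitLabels_apply_self hfac, Real.log_one, neg_zero, sum_const_zero, mul_zero] at hrel
    exact nonpos_of_mul_nonpos_right hrel (one_div_pos.2 (Nat.cast_pos.2 hN))
  have hsingle := eq_single_of_sum_neg_log_nonpos hcond hpos hloss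
  rw [← funext (empirical_fin y), joint_output_label_eq_empirical hsingle,
    joint_input_output_eq_empirical hsingle]
  exact ⟨fun i t => by rw [hsingle i, Pi.single_apply],
    mutualInfo_empirical_of_factorsThrough Function.FactorsThrough.rfl,
    mutualInfo_empirical_of_factorsThrough hfac⟩

/-- Proposition 2 of the paper: under no contradicting labels and
full model flexibility (the model `cond` ranges over all tuples of conditional
pmfs, so being a minimizer over all such conditionals encodes flexibility),
any minimizer of the empirical cross entropy loss satisfies
p_θ(T|xᵢ) = 1[T = yᵢ] for all i, and the induced representation satisfies
Î(T;Y) = Î(X;T) = Ĥ(Y) under the empirical distribution. -/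
theorem crossEntropy_minimizer_minimal_sufficiency
    {X Y : Type*} [Fintype X] [Fintype Y] [DecidableEq X] [DecidableEq Y]
    (N : ℕ) (hN : 0 < N) (x : Fin N → X) (y : Fin N → Y)
    (hnc : ∀ i j, x i = x j → y i = y j)
    (cond : X → Y → ℝ)
    (hcond0 : ∀ a t, 0 ≤ cond a t) (hcond1 : ∀ a, ∑ t, cond a t = 1)
    (hpos : ∀ i, 0 < cond (x i) (y i))
    (hmin : ∀ cond' : X → Y → ℝ,
      (∀ a t, 0 ≤ cond' a t) → (∀ a, ∑ t, cond' a t = 1) →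
      (∀ i, 0 < cond' (x i) (y i)) →
      (1 / (N : ℝ)) * ∑ i, -Real.log (cond (x i) (y i))
        ≤ (1 / (N : ℝ)) * ∑ i, -Real.log (cond' (x i) (y i))) :
    (∀ i t, cond (x i) t = if t = y i then 1 else 0) ∧
      mutualInfo (fun z : Y × Y =>
          (N : ℝ)⁻¹ * ∑ i, if y i = z.2 then cond (x i) z.1 else 0)
        = entropy (fun b => (N : ℝ)⁻¹ * ∑ i, if y i = b then 1 else 0) ∧
      mutualInfo (fun z : X × Y =>
          (N : ℝ)⁻¹ * ∑ i, if x i = z.1 then cond z.1 z.2 else 0)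
        = entropy (fun b => (N : ℝ)⁻¹ * ∑ i, if y i = b then 1 else 0) :=
  crossEntropy_minimizer_minimal_sufficiency_general N x y hnc cond hcond0 hcond1 hpos hmin
end

section
/- Nuisance insensitivity bound: let Z (nuisance) be independent of Y, and suppose T is a representation computed from X satisfying the Markov chain (Y,Z) ↔ X ↔ T. If T is sufficient for Y, i.e., I(T;Y) = I(X;Y), then I(T;Z) ≤ I(X;T) − I(X;Y). -/
/-!
Under the Markov chain `(Y, Z) ↔ X ↔ T` the pointwise information `log p(x,t) / (p(x) p(t))`
equals `log p(x,y,z,t) / (p(x,y,z) p(t))`, so `I(X;T) - I(T;Y) - I(T;Z)` is the relative entropy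
of `p` with respect to `q(x,y,z,t) = p(x,y,z) p(t,y) p(t,z) / (p(t) p(y) p(z))`. Because `Y ⫫ Z`,
summing `q` over `x`, then `z`, then `(t, y)` shows that its mass is at most that of `p`, so Gibbs'
inequality makes this relative entropy nonnegative. Sufficiency replaces `I(T;Y)` by `I(X;Y)`.
-/

open Finset

open Real

theorem sum_mul_log_div_nonneg {W : Type*} [Fintype W] {p q : W → ℝ} (hp : ∀ w, 0 ≤ p w)
    (hq : ∀ w, 0 ≤ q w) (hpq : ∀ w, 0 < p w → 0 < q w) (hsum : ∑ w, q w ≤ ∑ w, p w) :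
    0 ≤ ∑ w, p w * log (p w / q w) := by
  have termwise (w : W) : p w - q w ≤ p w * log (p w / q w) := by
    rcases (hp w).eq_or_lt with h | h
    · simp [← h, hq w]
    · have := one_sub_inv_le_log_of_pos (div_pos h (hpq w h))
      rw [inv_div] at this
      calc p w - q w = p w * (1 - q w / p w) := by field_simp
        _ ≤ _ := by gcongr
  calc (0 : ℝ) ≤ ∑ w, (p w - q w) := by rw [sum_sub_distrib]; linarith
    _ ≤ _ := sum_le_sum fun w _ => termwise w

theorem mul_div_le_of_nonneg {a : ℝ} (ha : 0 ≤ a) (b : ℝ) : a * b / b ≤ a := by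
  rcases eq_or_ne b 0 with rfl | hb
  · simpa
  · rw [mul_div_cancel_right₀ a hb]

section Pushforward

variable {W A B : Type*} [Fintype W] [DecidableEq A] [DecidableEq B]

def pushforward (p : W → ℝ) (f : W → A) (a : A) : ℝ := ∑ w with f w = a, p w

variable {p : W → ℝ}

theorem pushforward_nonneg (hp : ∀ w, 0 ≤ p w) (f : W → A) (a : A) : 0 ≤ pushforward p f a :=
  sum_nonneg fun w _ => hp w

theorem pushforward_apply_pos (hp : ∀ w, 0 ≤ p w) (f : W → A) {w : W} (hw : 0 < p w) :
    0 < pushforward p f (f w) :=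
  hw.trans_le (single_le_sum (fun v _ => hp v) (mem_filter.2 ⟨mem_univ w, rfl⟩))

theorem sum_pushforward [Fintype A] (p : W → ℝ) (f : W → A) :
    ∑ a, pushforward p f a = ∑ w, p w :=
  sum_fiberwise _ _ _

theorem sum_pushforward_prod_left [Fintype B] (p : W → ℝ) (f : W → A) (g : W → B) (a : A) :
    ∑ b, pushforward p (fun w => (f w, g w)) (a, b) = pushforward p f a := by
  simp only [pushforward, Prod.mk.injEq, ← filter_filter]
  exact sum_fiberwise _ _ _

theorem sum_pushforward_prod_right [Fintype A] (p : W → ℝ) (f : W → A) (g : W → B) (b : B) :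
    ∑ a, pushforward p (fun w => (f w, g w)) (a, b) = pushforward p g b := by
  simp only [pushforward, Prod.mk.injEq]
  simp_rw [and_comm (b := g _ = b), ← filter_filter]
  exact sum_fiberwise _ _ _

theorem mutualInfo_pushforward [Fintype A] [Fintype B] (p : W → ℝ) (f : W → A) (g : W → B) :
    mutualInfo (pushforward p fun w => (f w, g w)) = ∑ w, p w *
      log (pushforward p (fun w => (f w, g w)) (f w, g w) /
        (pushforward p f (f w) * pushforward p g (g w))) := by
  set q := pushforward p fun w => (f w, g w)
  set L : A × B → ℝ := fun c => log (q c / ((∑ b, q (c.1, b)) * ∑ a, q (a, c.2)))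
  calc mutualInfo q = ∑ c, ∑ w with (f w, g w) = c, p w * L c := by
        rw [mutualInfo, ← Fintype.sum_prod_type']
        exact sum_congr rfl fun c _ => sum_mul _ _ _
    _ = ∑ w, p w * L (f w, g w) := by
        rw [← sum_fiberwise univ (fun w => (f w, g w))]
        refine sum_congr rfl fun c _ => sum_congr rfl fun w hw => ?_
        rw [(mem_filter.1 hw).2]
    _ = _ := by simp only [L, q, sum_pushforward_prod_left, sum_pushforward_prod_right]

end Pushforward

theorem sum_mul_mul_div_le {X Y Z T : Type*} [Fintype X] [Fintype Y] [Fintype Z] [Fintype T]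
    (a : X → Y → Z → ℝ) (b : T → Y → ℝ) (c : T → Z → ℝ) (d : T → ℝ) (e : Y → ℝ) (f : Z → ℝ)
    (hb : ∀ t y, 0 ≤ b t y) (hc : ∀ t z, 0 ≤ c t z) (ha : ∀ y z, ∑ x, a x y z = e y * f z)
    (hcd : ∀ t, ∑ z, c t z = d t) :
    ∑ w : X × Y × Z × T, a w.1 w.2.1 w.2.2.1 * b w.2.2.2 w.2.1 * c w.2.2.2 w.2.2.1 /
      (d w.2.2.2 * e w.2.1 * f w.2.2.1) ≤ ∑ y, ∑ t, b t y := by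
  have hd (t : T) : 0 ≤ d t := hcd t ▸ sum_nonneg fun z _ => hc t z
  have sum_x (y : Y) (z : Z) (t : T) :
      ∑ x, a x y z * b t y * c t z / (d t * e y * f z) ≤ b t y * c t z / d t := by
    calc ∑ x, a x y z * b t y * c t z / (d t * e y * f z)
        = b t y * c t z / d t * (∑ x, a x y z) / (e y * f z) := by
          rw [mul_sum, sum_div]
          exact sum_congr rfl fun x _ => by ring
      _ ≤ b t y * c t z / d t := by
          rw [ha]
          exact mul_div_le_of_nonneg (div_nonneg (mul_nonneg (hb t y) (hc t z)) (hd t)) _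
  have sum_z (y : Y) (t : T) : ∑ z, b t y * c t z / d t ≤ b t y := by
    rw [← sum_div, ← mul_sum, hcd]
    exact mul_div_le_of_nonneg (hb t y) _
  calc _ = ∑ v : Y × Z × T, ∑ x, a x v.1 v.2.1 * b v.2.2 v.1 * c v.2.2 v.2.1 /
          (d v.2.2 * e v.1 * f v.2.1) := Fintype.sum_prod_type_right _
    _ ≤ ∑ v : Y × Z × T, b v.2.2 v.1 * c v.2.2 v.2.1 / d v.2.2 :=
        sum_le_sum fun v _ => sum_x _ _ _
    _ = ∑ y, ∑ t, ∑ z, b t y * c t z / d t := by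
        rw [Fintype.sum_prod_type]
        simp_rw [Fintype.sum_prod_type_right]
    _ ≤ ∑ y, ∑ t, b t y := sum_le_sum fun y _ => sum_le_sum fun t _ => sum_z y t

theorem log_div_sub_log_div_sub_log_div {pw pX pT pY pZ pXT pTY pTZ pXYZ : ℝ}
    (hX : 0 < pX) (hT : 0 < pT) (hY : 0 < pY) (hZ : 0 < pZ) (hXT : 0 < pXT) (hTY : 0 < pTY)
    (hTZ : 0 < pTZ) (hXYZ : 0 < pXYZ) (hmarkov : pw * pX = pXYZ * pXT) :
    log (pXT / (pX * pT)) - log (pTY / (pT * pY)) - log (pTZ / (pT * pZ)) =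
      log (pw / (pXYZ * pTY * pTZ / (pT * pY * pZ))) := by
  rw [← log_div (by positivity) (by positivity), ← log_div (by positivity) (by positivity)]
  congr 1
  field_simp
  linear_combination -hmarkov

section FourVariables

variable {X Y Z T : Type*} [Fintype X] [Fintype Y] [Fintype Z] [Fintype T]
  [DecidableEq X] [DecidableEq Y] [DecidableEq Z] [DecidableEq T] {p : X × Y × Z × T → ℝ}

noncomputable def factorizedDensity (p : X × Y × Z × T → ℝ) (w : X × Y × Z × T) : ℝ :=
  pushforward p (fun v => (v.1, v.2.1, v.2.2.1)) (w.1, w.2.1, w.2.2.1) *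
    pushforward p (fun v => (v.2.2.2, v.2.1)) (w.2.2.2, w.2.1) *
    pushforward p (fun v => (v.2.2.2, v.2.2.1)) (w.2.2.2, w.2.2.1) /
    (pushforward p (·.2.2.2) w.2.2.2 * pushforward p (·.2.1) w.2.1 *
      pushforward p (·.2.2.1) w.2.2.1)

theorem factorizedDensity_nonneg (hp : ∀ w, 0 ≤ p w) (w : X × Y × Z × T) :
    0 ≤ factorizedDensity p w :=
  div_nonneg (mul_nonneg (mul_nonneg (pushforward_nonneg hp _ _) (pushforward_nonneg hp _ _))
    (pushforward_nonneg hp _ _)) (mul_nonneg (mul_nonneg (pushforward_nonneg hp _ _)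
      (pushforward_nonneg hp _ _)) (pushforward_nonneg hp _ _))

theorem factorizedDensity_pos (hp : ∀ w, 0 ≤ p w) {w : X × Y × Z × T} (hw : 0 < p w) :
    0 < factorizedDensity p w :=
  div_pos (mul_pos (mul_pos (pushforward_apply_pos hp _ hw) (pushforward_apply_pos hp _ hw))
    (pushforward_apply_pos hp _ hw)) (mul_pos (mul_pos (pushforward_apply_pos hp _ hw)
      (pushforward_apply_pos hp _ hw)) (pushforward_apply_pos hp _ hw))

theorem sum_factorizedDensity_le (hp : ∀ w, 0 ≤ p w)
    (hindep : ∀ y z, pushforward p (fun w => (w.2.1, w.2.2.1)) (y, z) =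
      pushforward p (·.2.1) y * pushforward p (·.2.2.1) z) :
    ∑ w, factorizedDensity p w ≤ ∑ w, p w := by
  refine (sum_mul_mul_div_le
    (fun x y z => pushforward p (fun v => (v.1, v.2.1, v.2.2.1)) (x, y, z))
    (fun t y => pushforward p (fun v => (v.2.2.2, v.2.1)) (t, y))
    (fun t z => pushforward p (fun v => (v.2.2.2, v.2.2.1)) (t, z))
    (pushforward p (·.2.2.2)) (pushforward p (·.2.1)) (pushforward p (·.2.2.1))
    (fun _ _ => pushforward_nonneg hp _ _) (fun _ _ => pushforward_nonneg hp _ _)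
    (fun y z => ?_) (sum_pushforward_prod_left p (·.2.2.2) (·.2.2.1))).trans_eq ?_
  · rw [← hindep]
    exact sum_pushforward_prod_right p (·.1) (fun v => (v.2.1, v.2.2.1)) (y, z)
  · simp only [sum_pushforward_prod_right p (·.2.2.2) (·.2.1), sum_pushforward]

theorem mutualInfo_add_mutualInfo_le_of_markov (hp : ∀ w, 0 ≤ p w)
    (hindep : ∀ y z, pushforward p (fun w => (w.2.1, w.2.2.1)) (y, z) =
      pushforward p (·.2.1) y * pushforward p (·.2.2.1) z)
    (hmarkov : ∀ w, p w * pushforward p (·.1) w.1 =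
      pushforward p (fun v => (v.1, v.2.1, v.2.2.1)) (w.1, w.2.1, w.2.2.1) *
        pushforward p (fun v => (v.1, v.2.2.2)) (w.1, w.2.2.2)) :
    mutualInfo (pushforward p fun w => (w.2.2.2, w.2.1)) +
        mutualInfo (pushforward p fun w => (w.2.2.2, w.2.2.1)) ≤
      mutualInfo (pushforward p fun w => (w.1, w.2.2.2)) := by
  have hKL := sum_mul_log_div_nonneg hp (factorizedDensity_nonneg hp)
    (fun _ => factorizedDensity_pos hp) (sum_factorizedDensity_le hp hindep)
  rw [mutualInfo_pushforward p (·.2.2.2) (·.2.1), mutualInfo_pushforward p (·.2.2.2) (·.2.2.1),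
    mutualInfo_pushforward p (·.1) (·.2.2.2), ← sub_nonneg, ← sub_sub, ← sum_sub_distrib,
    ← sum_sub_distrib]
  refine hKL.trans_eq (sum_congr rfl fun w _ => ?_)
  rcases (hp w).eq_or_lt with h | h
  · simp [← h]
  · rw [← mul_sub, ← mul_sub, log_div_sub_log_div_sub_log_div (pushforward_apply_pos hp _ h)
      (pushforward_apply_pos hp _ h) (pushforward_apply_pos hp _ h) (pushforward_apply_pos hp _ h)
      (pushforward_apply_pos hp _ h) (pushforward_apply_pos hp _ h) (pushforward_apply_pos hp _ h)
      (pushforward_apply_pos hp _ h) (hmarkov w), factorizedDensity]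

end FourVariables

theorem nuisance_insensitivity_bound_general
    {X Y Z T : Type*} [Fintype X] [Fintype Y] [Fintype Z] [Fintype T]
    (p : X × Y × Z × T → ℝ)
    (hp0 : ∀ w, 0 ≤ p w)
    (hindep : ∀ y z,
      (∑ x, ∑ t, p (x, y, z, t))
        = (∑ x, ∑ z', ∑ t, p (x, y, z', t)) * (∑ x, ∑ y', ∑ t, p (x, y', z, t)))
    (hmarkov : ∀ x y z t,
      p (x, y, z, t) * (∑ y', ∑ z', ∑ t', p (x, y', z', t'))
        = (∑ t', p (x, y, z, t')) * (∑ y', ∑ z', p (x, y', z', t)))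
    (hsuff : mutualInfo (fun w : T × Y => ∑ x, ∑ z, p (x, w.2, z, w.1))
        = mutualInfo (fun w : X × Y => ∑ z, ∑ t, p (w.1, w.2, z, t))) :
    mutualInfo (fun w : T × Z => ∑ x, ∑ y, p (x, y, w.2, w.1))
      ≤ mutualInfo (fun w : X × T => ∑ y, ∑ z, p (w.1, y, z, w.2))
        - mutualInfo (fun w : X × Y => ∑ z, ∑ t, p (w.1, w.2, z, t)) := by
  classical
  -- `sum_filter` leaves `Decidable` instances that mention the whole tuple; `dsimp +instances`
  -- normalizes them, so that `simp` can pull each condition out of the sums it does not bind.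
  obtain ⟨hTY, hTZ, hXT⟩ :
    (fun w : T × Y => ∑ x, ∑ z, p (x, w.2, z, w.1)) = pushforward p (fun w => (w.2.2.2, w.2.1)) ∧
    (fun w : T × Z => ∑ x, ∑ y, p (x, y, w.2, w.1)) = pushforward p (fun w => (w.2.2.2, w.2.2.1)) ∧
    (fun w : X × T => ∑ y, ∑ z, p (w.1, y, z, w.2)) = pushforward p (fun w => (w.1, w.2.2.2)) := by
    refine ⟨?_, ?_, ?_⟩ <;> ext ⟨a, b⟩ <;>
      simp only [pushforward, sum_filter, Fintype.sum_prod_type] <;> dsimp +instances only <;>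
      simp [ite_and]
  have hbound := mutualInfo_add_mutualInfo_le_of_markov hp0
    (fun y z => by
      simp only [pushforward, sum_filter, Fintype.sum_prod_type]; dsimp +instances only
      simpa [ite_and] using hindep y z)
    (fun ⟨x, y, z, t⟩ => by
      simp only [pushforward, sum_filter, Fintype.sum_prod_type]; dsimp +instances only
      simpa [ite_and] using hmarkov x y z t)
  rw [← hTY, ← hTZ, ← hXT, hsuff] at hbound
  linarith

/-- nuisance insensitivity, Prop. 3.1 of Achille & Soatto: let the
joint pmf of (X, Y, Z, T) on finite sets satisfy: (i) Z ⫫ Y; (ii) the Markov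
chain (Y,Z) ↔ X ↔ T, i.e. T is conditionally independent of (Y,Z) given X
(stated multiplicatively); (iii) sufficiency I(T;Y) = I(X;Y).
Then I(T;Z) ≤ I(X;T) − I(X;Y). -/
theorem nuisance_insensitivity_bound
    {X Y Z T : Type*} [Fintype X] [Fintype Y] [Fintype Z] [Fintype T]
    (p : X × Y × Z × T → ℝ)
    (hp0 : ∀ w, 0 ≤ p w) (hp1 : ∑ w, p w = 1)
    (hindep : ∀ y z,
      (∑ x, ∑ t, p (x, y, z, t))
        = (∑ x, ∑ z', ∑ t, p (x, y, z', t)) * (∑ x, ∑ y', ∑ t, p (x, y', z, t)))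
    (hmarkov : ∀ x y z t,
      p (x, y, z, t) * (∑ y', ∑ z', ∑ t', p (x, y', z', t'))
        = (∑ t', p (x, y, z, t')) * (∑ y', ∑ z', p (x, y', z', t)))
    (hsuff : mutualInfo (fun w : T × Y => ∑ x, ∑ z, p (x, w.2, z, w.1))
        = mutualInfo (fun w : X × Y => ∑ z, ∑ t, p (w.1, w.2, z, t))) :
    mutualInfo (fun w : T × Z => ∑ x, ∑ y, p (x, y, w.2, w.1))
      ≤ mutualInfo (fun w : X × T => ∑ y, ∑ z, p (w.1, y, z, w.2))
        - mutualInfo (fun w : X × Y => ∑ z, ∑ t, p (w.1, w.2, z, t)) :=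
  nuisance_insensitivity_bound_general p hp0 hindep hmarkov hsuff
end
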